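/- Let X be a reflexive Banach space with dual Y, φ ∈ Γ₀(X), ε > 0, M = Graph(∂φ), A = {0} × closed-ball_Y(0,ε). Then M + A is a BB-graph if and only if for every y ∈ Y the set ⋃_{‖ȳ - y‖ ≤ ε} ∂φ*(ȳ) is convex. -/

import Mathlib

noncomputable section

/-- Convexity for `EReal`-valued functions. -/
def ConvexE {V : Type*} [AddCommGroup V] [Module ℝ V] (f : V → EReal) : Prop :=
  ∀ x₁ x₂ : V, ∀ a b : ℝ, 0 ≤ a → 0 ≤ b → a + b = 1 →
    f (a • x₁ + b • x₂) ≤ (a : EReal) * f x₁ + (b : EReal) * f x₂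

/-- `Γ₀`: proper, convex, lower semicontinuous, with values in `ℝ ∪ {+∞}`. -/
def Gamma0 {V : Type*} [AddCommGroup V] [Module ℝ V] [TopologicalSpace V]
    (f : V → EReal) : Prop :=
  (∀ v, f v ≠ ⊥) ∧ (∃ v, f v ≠ ⊤) ∧ ConvexE f ∧ LowerSemicontinuous f

/-- Subdifferential with respect to a pairing `p`. -/
def subdiffE {V W : Type*} [AddCommGroup V] [Module ℝ V]
    (p : V → W → ℝ) (f : V → EReal) (x : V) : Set W :=
  {u | ∀ z, (p (z - x) u : EReal) + f x ≤ f z}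

/-- Bipotential with respect to the duality pairing `p`. -/
def IsBipotential {X Y : Type*} [AddCommGroup X] [Module ℝ X] [TopologicalSpace X]
    [AddCommGroup Y] [Module ℝ Y] [TopologicalSpace Y]
    (p : X → Y → ℝ) (b : X → Y → EReal) : Prop :=
  (∀ x y, b x y ≠ ⊥) ∧
  (∀ x, (∃ y, b x y ≠ ⊤) → Gamma0 (b x)) ∧
  (∀ y, (∃ x, b x y ≠ ⊤) → Gamma0 (fun x => b x y)) ∧
  (∀ x y, (p x y : EReal) ≤ b x y) ∧
  (∀ x y,
    (y ∈ subdiffE p (fun x' => b x' y) x ↔ b x y = (p x y : EReal)) ∧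
    (x ∈ subdiffE (fun y' x' => p x' y') (b x) y ↔ b x y = (p x y : EReal)))

/-- The graph `M(b)` of a bipotential. -/
def MGraph {X Y : Type*} (p : X → Y → ℝ) (b : X → Y → EReal) : Set (X × Y) :=
  {q | b q.1 q.2 = (p q.1 q.2 : EReal)}

/-- Synchronised convex function (sync). -/
def IsSync {X Y : Type*} [AddCommGroup X] [Module ℝ X] [TopologicalSpace X]
    [AddCommGroup Y] [Module ℝ Y] [TopologicalSpace Y]
    (c : X → Y → EReal) : Prop :=
  (∀ x y, 0 ≤ c x y) ∧
  (∀ x, (∃ y, c x y ≠ ⊤) → Gamma0 (c x)) ∧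
  (∀ y, (∃ x, c x y ≠ ⊤) → Gamma0 (fun x => c x y)) ∧
  (∀ x, (∃ y', c x y' ≠ ⊤) → ∀ y, (∀ y', c x y ≤ c x y') → c x y = 0) ∧
  (∀ y, (∃ x', c x' y ≠ ⊤) → ∀ x, (∀ x', c x y ≤ c x' y) → c x y = 0)

/-- A BB-graph: all sections are convex and closed. -/
def IsBBGraph {X Y : Type*} [AddCommGroup X] [Module ℝ X] [TopologicalSpace X]
    [AddCommGroup Y] [Module ℝ Y] [TopologicalSpace Y] (M : Set (X × Y)) : Prop :=
  (∀ x, Convex ℝ {y | (x, y) ∈ M} ∧ IsClosed {y | (x, y) ∈ M}) ∧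
  (∀ y, Convex ℝ {x | (x, y) ∈ M} ∧ IsClosed {x | (x, y) ∈ M})

variable {X : Type*} [NormedAddCommGroup X] [NormedSpace ℝ X]

/-- Fenchel conjugate of `φ : X → ℝ ∪ {+∞}`, defined on the dual space. -/
def fenchelConj (φ : X → EReal) (y : X →L[ℝ] ℝ) : EReal :=
  ⨆ x : X, (y x : EReal) - φ x

/-- Subdifferential of `φ : X → ℝ ∪ {+∞}`, with values in the dual space. -/
def subdiff (φ : X → EReal) (x : X) : Set (X →L[ℝ] ℝ) :=
  {u | ∀ z : X, (u (z - x) : EReal) + φ x ≤ φ z}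

/-- Subdifferential of a function on the dual space, with values in `X`
(identifying `X` with its bidual via reflexivity). -/
def subdiffStar (ψ : (X →L[ℝ] ℝ) → EReal) (y : X →L[ℝ] ℝ) : Set X :=
  {x | ∀ z : X →L[ℝ] ℝ, (((z - y) x) : EReal) + ψ y ≤ ψ z}

/-!
`(x, w) ∈ M + A` iff some `u ∈ ∂φ(x)` lies within `ε` of `w`. Hence the section at `x` is
`∂φ(x) + B(0, ε)`: it is convex, and closed because `∂φ(x)` is weak-* closed and the ball is
weak-* compact (Banach–Alaoglu). The section at `w` is `⋃_{‖u - w‖ ≤ ε} {x | u ∈ ∂φ(x)}`; it is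
closed, being the projection of the graph of `∂φ` along a weak-* compact ball, and it is the union
in the statement because `x ∈ ∂φ*(u) ↔ u ∈ ∂φ(x)` for `φ ∈ Γ₀(X)`. The nontrivial half of this
equivalence is the Fenchel–Moreau inequality `φ ≤ φ**`, obtained by separating a point below the
graph of `φ` from its closed convex epigraph. So convexity of the sections at `w` is the only
condition left.
-/

open Filter Metric Topology
open scoped Pointwise

lemma ConvexE.convex_epigraph {V : Type*} [AddCommGroup V] [Module ℝ V] {f : V → EReal}
    (hf : ConvexE f) : Convex ℝ {p : V × ℝ | f p.1 ≤ p.2} := by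
  rintro ⟨x₁, t₁⟩ h₁ ⟨x₂, t₂⟩ h₂ a b ha hb hab
  calc f (a • x₁ + b • x₂) ≤ (a : EReal) * f x₁ + (b : EReal) * f x₂ := hf x₁ x₂ a b ha hb hab
    _ ≤ (a : EReal) * t₁ + (b : EReal) * t₂ :=
      add_le_add (mul_le_mul_of_nonneg_left h₁ (EReal.coe_nonneg.2 ha))
        (mul_le_mul_of_nonneg_left h₂ (EReal.coe_nonneg.2 hb))
    _ = ↑(a * t₁ + b * t₂) := by norm_cast

lemma Gamma0.exists_eq_coe {V : Type*} [AddCommGroup V] [Module ℝ V] [TopologicalSpace V]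
    {f : V → EReal} (hf : Gamma0 f) : ∃ v, ∃ a : ℝ, f v = a := by
  obtain ⟨hbot, ⟨v, hv⟩, -⟩ := hf
  exact ⟨v, _, (EReal.coe_toReal hv (hbot v)).symm⟩

section FenchelConjugate

variable {φ : X → EReal}

lemma coe_sub_le_fenchelConj (y : X →L[ℝ] ℝ) {x : X} {a : ℝ} (hx : φ x = a) :
    ((y x - a : ℝ) : EReal) ≤ fenchelConj φ y :=
  calc ((y x - a : ℝ) : EReal) = y x - φ x := by rw [hx, EReal.coe_sub]
    _ ≤ fenchelConj φ y := le_iSup (fun z => (y z : EReal) - φ z) x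

lemma fenchelConj_le_iff {y : X →L[ℝ] ℝ} {c : ℝ} :
    fenchelConj φ y ≤ c ↔ ∀ z, ((y z - c : ℝ) : EReal) ≤ φ z := by
  refine iSup_le_iff.trans (forall_congr' fun z => ?_)
  induction φ z using EReal.rec with
  | bot => simpa using EReal.coe_ne_bot (y z - c)
  | top => simp
  | coe m => norm_cast; constructor <;> intro h <;> linarith

lemma mem_subdiff_iff_fenchelConj_le {x : X} {a : ℝ} (hx : φ x = a) {u : X →L[ℝ] ℝ} :
    u ∈ subdiff φ x ↔ fenchelConj φ u ≤ ↑(u x - a) := by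
  rw [fenchelConj_le_iff]
  refine forall_congr' fun z => ?_
  rw [hx, ← EReal.coe_add, map_sub, show u z - u x + a = u z - (u x - a) by ring]

lemma Gamma0.exists_separation_epigraph (hφ : Gamma0 φ) {x₀ : X} {r : ℝ} (hr : ↑r < φ x₀) :
    ∃ (g : X →L[ℝ] ℝ) (s u : ℝ), 0 ≤ s ∧ g x₀ + r * s < u ∧
      ∀ z (m : ℝ), φ z ≤ m → u < g z + m * s := by
  have hclosed : IsClosed {p : X × ℝ | φ p.1 ≤ p.2} :=
    hφ.2.2.2.isClosed_epigraph.preimage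
      (continuous_fst.prodMk (continuous_coe_real_ereal.comp continuous_snd))
  obtain ⟨f, u, hfx, hf⟩ :=
    geometric_hahn_banach_point_closed (x := (x₀, r)) hφ.2.2.1.convex_epigraph hclosed (not_le.2 hr)
  set g := f.comp (.inl ℝ X ℝ)
  set s := f (0, 1)
  have hsplit (z : X) (m : ℝ) : f (z, m) = g z + m * s := by
    rw [← smul_eq_mul, ← map_smul, ContinuousLinearMap.comp_apply, ← map_add]
    simp
  refine ⟨g, s, u, ?_, by rwa [← hsplit], fun z m hz => hsplit z m ▸ hf (z, m) hz⟩
  -- the epigraph contains the upward vertical ray above a point of the domain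
  obtain ⟨v, a, hv⟩ := hφ.exists_eq_coe
  by_contra! hs
  have hm := le_max_right a ((u - g v) / s)
  rw [div_le_iff_of_neg hs] at hm
  have hu := hf (v, max a ((u - g v) / s)) (hv.trans_le (EReal.coe_le_coe_iff.2 (le_max_left _ _)))
  rw [hsplit] at hu
  linarith

lemma exists_fenchelConj_le_of_separation {g : X →L[ℝ] ℝ} {s u : ℝ} (hs : 0 < s) {x₀ : X}
    {r : ℝ} (hx₀ : g x₀ + r * s < u) (hepi : ∀ z (m : ℝ), φ z ≤ m → u < g z + m * s) :
    ∃ (y : X →L[ℝ] ℝ) (c : ℝ), fenchelConj φ y ≤ c ∧ r < y x₀ - c := by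
  have hy : ∀ z, (-s⁻¹ • g) z - -s⁻¹ * u = (u - g z) / s := fun z => by
    simp only [smul_apply, smul_eq_mul]; ring
  refine ⟨-s⁻¹ • g, -s⁻¹ * u, fenchelConj_le_iff.2 fun z => ?_, ?_⟩
  · refine EReal.le_of_forall_lt_iff_le.1 fun m hm => ?_
    rw [hy, EReal.coe_le_coe_iff, div_le_iff₀ hs]
    linarith [hepi z m hm.le]
  · rw [hy, lt_div_iff₀ hs]
    linarith

lemma Gamma0.exists_fenchelConj_le (hφ : Gamma0 φ) :
    ∃ (y : X →L[ℝ] ℝ) (c : ℝ), fenchelConj φ y ≤ c := by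
  obtain ⟨v, a, hv⟩ := hφ.exists_eq_coe
  obtain ⟨g, s, u, hs, hv₀, hepi⟩ :=
    hφ.exists_separation_epigraph (x₀ := v) (r := a - 1) (by rw [hv]; exact_mod_cast sub_one_lt a)
  -- `(v, a)` lies in the epigraph and `(v, a - 1)` does not, so the hyperplane is not vertical
  have hs : 0 < s := hs.lt_of_ne fun h => by
    have := hepi v a hv.le
    subst h
    linarith
  obtain ⟨y, c, hyc, -⟩ := exists_fenchelConj_le_of_separation hs hv₀ hepi
  exact ⟨y, c, hyc⟩

/-- The Fenchel–Moreau inequality `φ ≤ φ**`. -/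
lemma Gamma0.exists_fenchelConj_le_of_lt (hφ : Gamma0 φ) {x₀ : X} {r : ℝ} (hr : ↑r < φ x₀) :
    ∃ (y : X →L[ℝ] ℝ) (c : ℝ), fenchelConj φ y ≤ c ∧ r < y x₀ - c := by
  obtain ⟨g, s, u, hs, hx₀, hepi⟩ := hφ.exists_separation_epigraph hr
  rcases hs.lt_or_eq with hs | rfl
  · exact exists_fenchelConj_le_of_separation hs hx₀ hepi
  -- The separating hyperplane is vertical: tilt an affine minorant by a large multiple of it.
  simp only [mul_zero, add_zero] at hx₀ hepi
  obtain ⟨y₀, c₀, hy₀⟩ := hφ.exists_fenchelConj_le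
  obtain ⟨n, hn⟩ := exists_nat_gt ((r - (y₀ x₀ - c₀)) / (u - g x₀))
  rw [div_lt_iff₀ (sub_pos.2 hx₀)] at hn
  refine ⟨y₀ - (n : ℝ) • g, c₀ - n * u, fenchelConj_le_iff.2 fun z => ?_, ?_⟩
  · refine EReal.le_of_forall_lt_iff_le.1 fun m hm => ?_
    have hgz := hepi z m hm.le
    calc (((y₀ - (n : ℝ) • g) z - (c₀ - n * u) : ℝ) : EReal) ≤ ↑(y₀ z - c₀) := by
          simp only [sub_apply, smul_apply, smul_eq_mul, EReal.coe_le_coe_iff]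
          nlinarith [n.cast_nonneg (α := ℝ)]
      _ ≤ φ z := fenchelConj_le_iff.1 hy₀ z
      _ ≤ m := hm.le
  · simp only [sub_apply, smul_apply, smul_eq_mul]
    linarith

lemma ne_top_of_mem_subdiff (hφ : ∃ v, φ v ≠ ⊤) {x : X} {u : X →L[ℝ] ℝ}
    (hu : u ∈ subdiff φ x) : φ x ≠ ⊤ := fun hx => by
  obtain ⟨v, hv⟩ := hφ
  have := hu v
  rw [hx, EReal.coe_add_top] at this
  exact hv (top_le_iff.1 this)

lemma mem_subdiffStar_fenchelConj_of_mem_subdiff (hφ : Gamma0 φ) {x : X} {u : X →L[ℝ] ℝ}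
    (hu : u ∈ subdiff φ x) : x ∈ subdiffStar (fenchelConj φ) u := by
  have ha := (EReal.coe_toReal (ne_top_of_mem_subdiff hφ.2.1 hu) (hφ.1 x)).symm
  intro z
  calc ↑((z - u) x) + fenchelConj φ u ≤ ↑((z - u) x) + ↑(u x - (φ x).toReal) :=
        add_le_add le_rfl ((mem_subdiff_iff_fenchelConj_le ha).1 hu)
    _ = ↑(z x - (φ x).toReal) := by
        rw [← EReal.coe_add, sub_apply]; ring_nf
    _ ≤ fenchelConj φ z := coe_sub_le_fenchelConj z ha

lemma mem_subdiff_of_mem_subdiffStar_fenchelConj (hφ : Gamma0 φ) {x : X} {u : X →L[ℝ] ℝ}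
    (hx : x ∈ subdiffStar (fenchelConj φ) u) : u ∈ subdiff φ x := by
  obtain ⟨v, a, hv⟩ := hφ.exists_eq_coe
  obtain ⟨y₀, c₀, hy₀⟩ := hφ.exists_fenchelConj_le
  have htop : fenchelConj φ u ≠ ⊤ := fun h => by
    have := (hx y₀).trans hy₀
    rw [h, EReal.coe_add_top, top_le_iff] at this
    exact EReal.coe_ne_top _ this
  have hb := (EReal.coe_toReal htop
    (ne_bot_of_le_ne_bot (EReal.coe_ne_bot _) (coe_sub_le_fenchelConj u hv))).symm
  set b := (fenchelConj φ u).toReal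
  have hφx : φ x ≤ ↑(u x - b) := by
    by_contra! h
    obtain ⟨y, c, hyc, hlt⟩ := hφ.exists_fenchelConj_le_of_lt h
    have := (hx y).trans hyc
    rw [hb, ← EReal.coe_add, EReal.coe_le_coe_iff, sub_apply] at this
    linarith
  have ha := (EReal.coe_toReal (hφx.trans_lt (EReal.coe_lt_top _)).ne (hφ.1 x)).symm
  rw [mem_subdiff_iff_fenchelConj_le ha, hb, EReal.coe_le_coe_iff]
  rw [ha, EReal.coe_le_coe_iff] at hφx
  linarith

lemma mem_subdiffStar_fenchelConj_iff (hφ : Gamma0 φ) {x : X} {u : X →L[ℝ] ℝ} :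
    x ∈ subdiffStar (fenchelConj φ) u ↔ u ∈ subdiff φ x :=
  ⟨mem_subdiff_of_mem_subdiffStar_fenchelConj hφ, mem_subdiffStar_fenchelConj_of_mem_subdiff hφ⟩

end FenchelConjugate

lemma isClosed_setOf_coe_add_le {α : Type*} [TopologicalSpace α] {f : α → ℝ} {g : α → EReal}
    (hf : Continuous f) (hg : LowerSemicontinuous g) (c : EReal) :
    IsClosed {a | (f a : EReal) + g a ≤ c} :=
  ((continuous_coe_real_ereal.comp hf).lowerSemicontinuous.add' hg fun _ =>
    EReal.continuousAt_add (Or.inl (EReal.coe_ne_top _)) (Or.inl (EReal.coe_ne_bot _))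
  ).isClosed_preimage c

lemma continuousOn_weakDual_eval (R : ℝ) :
    ContinuousOn (fun p : X × WeakDual ℝ X => p.2 p.1)
      {p | ‖WeakDual.toStrongDual p.2‖ ≤ R} := by
  rintro ⟨x₀, u₀⟩ -
  have hsmall : Tendsto (fun p : X × WeakDual ℝ X => p.2 (p.1 - x₀))
      (𝓝[{p | ‖WeakDual.toStrongDual p.2‖ ≤ R}] (x₀, u₀)) (𝓝 0) := by
    refine squeeze_zero_norm' (eventually_nhdsWithin_of_forall fun p (hp : _ ≤ R) =>
      ((WeakDual.toStrongDual p.2).le_opNorm _).trans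
        (mul_le_mul_of_nonneg_right hp (norm_nonneg _))) ?_
    refine Tendsto.mono_left ?_ nhdsWithin_le_nhds
    exact Continuous.tendsto' (f := fun p : X × WeakDual ℝ X => R * ‖p.1 - x₀‖) (by fun_prop) _ _
      (by simp)
  have hfixed : Tendsto (fun p : X × WeakDual ℝ X => p.2 x₀)
      (𝓝[{p | ‖WeakDual.toStrongDual p.2‖ ≤ R}] (x₀, u₀)) (𝓝 (u₀ x₀)) :=
    (((WeakDual.eval_continuous x₀).comp continuous_snd).tendsto _).mono_left nhdsWithin_le_nhds
  simpa [ContinuousWithinAt] using hsmall.add hfixed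


/-- A weak-* closed set plus a weak-* compact ball is weak-* closed, hence norm closed. -/
lemma isClosed_subdiff_add_closedBall (φ : X → EReal) (x : X) (ε : ℝ) :
    IsClosed (subdiff φ x + closedBall (0 : X →L[ℝ] ℝ) ε) := by
  have hsub : IsClosed (WeakDual.toStrongDual ⁻¹' subdiff φ x : Set (WeakDual ℝ X)) := by
    simp only [subdiff, Set.ofPred_forall]
    exact isClosed_iInter fun z =>
      isClosed_setOf_coe_add_le (WeakDual.eval_continuous (z - x)) lowerSemicontinuous_const _
  exact (hsub.add_right_of_isCompact (WeakDual.isCompact_closedBall 0 ε)).preimage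
    NormedSpace.Dual.toWeakDual_continuous

/-- The set is the projection of the graph of `∂φ` over a weak-* compact ball, on which
evaluation is jointly continuous. -/
lemma isClosed_biUnion_closedBall_setOf_mem_subdiff {φ : X → EReal} (hφ : LowerSemicontinuous φ)
    (w : X →L[ℝ] ℝ) (ε : ℝ) :
    IsClosed (⋃ u ∈ closedBall w ε, {x | u ∈ subdiff φ x}) := by
  set K : Set (WeakDual ℝ X) := WeakDual.toStrongDual ⁻¹' closedBall w ε
  have : CompactSpace K := isCompact_iff_compactSpace.1 (WeakDual.isCompact_closedBall w ε)
  have heval : Continuous fun p : X × K => (p.2 : WeakDual ℝ X) p.1 :=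
    (continuousOn_weakDual_eval (‖w‖ + ε)).comp_continuous
      (continuous_fst.prodMk (continuous_subtype_val.comp continuous_snd))
      fun p => norm_le_of_mem_closedBall p.2.2
  have hgraph :
      IsClosed {p : X × K | ∀ z, ((p.2 : WeakDual ℝ X) (z - p.1) : EReal) + φ p.1 ≤ φ z} := by
    rw [Set.ofPred_forall]
    refine isClosed_iInter fun z =>
      isClosed_setOf_coe_add_le ?_ (hφ.comp (continuous_fst (X := X) (Y := K))) _
    simp only [map_sub]
    exact ((WeakDual.eval_continuous z).comp (continuous_subtype_val.comp continuous_snd)).sub heval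
  convert isClosedMap_fst_of_compactSpace _ hgraph
  ext x
  simp only [Set.mem_iUnion, exists_prop, Set.mem_image, Prod.exists, Subtype.exists]
  exact ⟨fun ⟨u, hu, hx⟩ => ⟨x, u, hu, hx, rfl⟩, fun ⟨_, u, hu, hx, h⟩ => h ▸ ⟨u, hu, hx⟩⟩

lemma convex_subdiff (φ : X → EReal) (x : X) : Convex ℝ (subdiff φ x) := by
  simp only [subdiff, Set.ofPred_forall]
  refine convex_iInter fun z => ?_
  have hlower : IsLowerSet {r : ℝ | ↑r + φ x ≤ φ z} := fun _ _ hba ha =>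
    (add_le_add (EReal.coe_le_coe_iff.2 hba) le_rfl).trans ha
  exact hlower.ordConnected.convex.linear_preimage
    (ContinuousLinearMap.apply ℝ ℝ (z - x)).toLinearMap

section SumWithVerticalBall

variable {α E : Type*} [AddZeroClass α] {M : Set (α × E)}

lemma setOf_mem_add_zero_prod [Add E] (x : α) (B : Set E) :
    {w | (x, w) ∈ M + {0} ×ˢ B} = {u | (x, u) ∈ M} + B := by
  ext w
  simp [Set.mem_add]

lemma setOf_mem_add_zero_prod_closedBall [SeminormedAddCommGroup E] (w : E) (ε : ℝ) :
    {x | (x, w) ∈ M + {0} ×ˢ closedBall 0 ε} = ⋃ u ∈ closedBall w ε, {x | (x, u) ∈ M} := by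
  ext x
  simp only [Set.mem_iUnion, exists_prop]
  constructor
  · rintro ⟨⟨x', u⟩, hu, ⟨_, b⟩, ⟨rfl, hb⟩, h⟩
    obtain ⟨rfl, rfl⟩ : x' = x ∧ u + b = w := by simpa using h
    exact ⟨u, by simpa using hb, hu⟩
  · rintro ⟨u, hu, hM⟩
    refine ⟨(x, u), hM, (0, w - u), ⟨rfl, ?_⟩, by simp⟩
    rwa [mem_closedBall_zero_iff, ← dist_eq_norm']

end SumWithVerticalBall

open scoped Pointwise in
theorem blurred_BBGraph_iff_general (φ : X → EReal) (hφ : Gamma0 φ) (ε : ℝ)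
    (M A : Set (X × (X →L[ℝ] ℝ)))
    (hM : M = {q | q.2 ∈ subdiff φ q.1})
    (hA : A = {0} ×ˢ Metric.closedBall 0 ε) :
    IsBBGraph (M + A) ↔
      ∀ y : X →L[ℝ] ℝ,
        Convex ℝ (⋃ y' ∈ Metric.closedBall y ε, subdiffStar (fenchelConj φ) y') := by
  subst hA
  have hsnd (w : X →L[ℝ] ℝ) : {x | (x, w) ∈ M + {0} ×ˢ closedBall 0 ε} =
      ⋃ u ∈ closedBall w ε, subdiffStar (fenchelConj φ) u := by
    rw [setOf_mem_add_zero_prod_closedBall]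
    refine Set.iUnion₂_congr fun u _ => Set.ext fun x => ?_
    rw [mem_subdiffStar_fenchelConj_iff hφ, hM]
    rfl
  refine ⟨fun h y => hsnd y ▸ (h.2 y).1, fun h => ⟨fun x => ?_, fun w => ⟨hsnd w ▸ h w, ?_⟩⟩⟩
  · rw [setOf_mem_add_zero_prod, hM]
    exact ⟨(convex_subdiff φ x).add (convex_closedBall 0 ε), isClosed_subdiff_add_closedBall φ x ε⟩
  · rw [setOf_mem_add_zero_prod_closedBall, hM]
    exact isClosed_biUnion_closedBall_setOf_mem_subdiff hφ.2.2.2 w ε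

open scoped Pointwise in
/-- `M + A` is a BB-graph iff for every `y` the set
`⋃_{‖y' - y‖ ≤ ε} ∂φ*(y')` is convex. -/
theorem blurred_BBGraph_iff [CompleteSpace X]
    (hrefl : Function.Surjective (NormedSpace.inclusionInDoubleDual ℝ X))
    (φ : X → EReal) (hφ : Gamma0 φ) (ε : ℝ) (hε : 0 < ε)
    (M A : Set (X × (X →L[ℝ] ℝ)))
    (hM : M = {q | q.2 ∈ subdiff φ q.1})
    (hA : A = {0} ×ˢ Metric.closedBall 0 ε) :
    IsBBGraph (M + A) ↔
      ∀ y : X →L[ℝ] ℝ,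
        Convex ℝ (⋃ y' ∈ Metric.closedBall y ε, subdiffStar (fenchelConj φ) y') :=
  blurred_BBGraph_iff_general φ hφ ε M A hM hA
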